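/- arXiv:2109.11244 — 7 statements merged into one kernel-verified Lean document; each statement's English description precedes it below -/
import Mathlib

section
/- Let V be a type, adj a relation on V, and ρ, a, v vertices. If a is reachable from ρ and v is stable for a (relative to ρ), then a is reachable from v. (In words: a stable ancestor of a vertex reachable from the root is itself an ancestor of that vertex.) -/
/-- `v` is stable for `a` relative to root `ρ`: either `ρ = v`, or `a` is not
reachable from `ρ` when all arcs entering `v` are forbidden (i.e. every directed
path from `ρ` to `a` passes through `v`). -/
def Stable {V : Type*} (adj : V → V → Prop) (ρ v a : V) : Prop :=
  ρ = v ∨ ¬ Relation.ReflTransGen (fun x y => adj x y ∧ y ≠ v) ρ a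

/-- A path from `x` to `y` either never enters `v`, or its suffix after the last visit of `v`
is a path from `v` to `y`. -/
theorem Relation.ReflTransGen.avoids_or_from {V : Type*} {r : V → V → Prop} {x y : V}
    (v : V) (h : Relation.ReflTransGen r x y) :
    Relation.ReflTransGen (fun a b => r a b ∧ b ≠ v) x y ∨ Relation.ReflTransGen r v y := by
  induction h with
  | refl => exact Or.inl .refl
  | @tail b c _ hbc ih =>
    rcases ih with avoiding | fromV
    · by_cases hcv : c = v
      · exact Or.inr (hcv ▸ .refl)
      · exact Or.inl (avoiding.tail ⟨hbc, hcv⟩)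
    · exact Or.inr (fromV.tail hbc)

/-- A stable vertex for a vertex reachable from the root is itself an ancestor
of that vertex. -/
theorem stable_ancestor {V : Type*} (adj : V → V → Prop) (ρ a v : V)
    (hreach : Relation.ReflTransGen adj ρ a)
    (hstable : Stable adj ρ v a) :
    Relation.ReflTransGen adj v a := by
  rcases hstable with rfl | notAvoiding
  · exact hreach
  · exact (hreach.avoids_or_from v).resolve_left notAvoiding
end

section
/- Let V be a type, adj a relation on V, and ρ, a vertices with a reachable from ρ. If v and w are both stable for a (relative to ρ), then v is reachable from w or w is reachable from v. (Stable vertices for a common vertex are comparable under the ancestor relation.) -/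
theorem Relation.ReflTransGen.avoids_or_passes_through {α : Type*} {r : α → α → Prop} {x y : α}
    (s : α) (h : ReflTransGen r x y) :
    ReflTransGen (fun p q => r p q ∧ q ≠ s) x y ∨ (ReflTransGen r x s ∧ ReflTransGen r s y) := by
  induction h with
  | refl => exact Or.inl .refl
  | @tail b c _ hbc ih =>
    by_cases hcs : c = s
    · subst hcs
      have hxb : ReflTransGen r x b :=
        ih.elim (ReflTransGen.mono (fun _ _ => And.left) _ _) fun h => h.1.trans h.2
      exact Or.inr ⟨hxb.tail hbc, .refl⟩
    · exact ih.imp (·.tail ⟨hbc, hcs⟩) fun ⟨hxs, hsb⟩ => ⟨hxs, hsb.tail hbc⟩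

theorem Stable.reflTransGen_root_and_target {V : Type*} {adj : V → V → Prop} {ρ v a : V}
    (hv : Stable adj ρ v a) (hreach : Relation.ReflTransGen adj ρ a) :
    Relation.ReflTransGen adj ρ v ∧ Relation.ReflTransGen adj v a := by
  rcases hv with rfl | hv
  · exact ⟨.refl, hreach⟩
  · exact (hreach.avoids_or_passes_through v).resolve_left hv

/-- Stable vertices for a common vertex are comparable under the ancestor
relation. -/
theorem stable_comparable {V : Type*} (adj : V → V → Prop) (ρ a v w : V)
    (hreach : Relation.ReflTransGen adj ρ a)
    (hv : Stable adj ρ v a) (hw : Stable adj ρ w a) :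
    Relation.ReflTransGen adj w v ∨ Relation.ReflTransGen adj v w := by
  by_contra! ⟨hwv, hvw⟩
  obtain ⟨hρv, hva⟩ := hv.reflTransGen_root_and_target hreach
  have hρv' := (hρv.avoids_or_passes_through w).resolve_right fun h => hwv h.2
  have hva' := (hva.avoids_or_passes_through w).resolve_right fun h => hvw h.1
  rcases hw with rfl | hw
  · exact hwv hρv
  · exact hw (hρv'.trans hva')
end

section
/- Existence and uniqueness of the lowest stable ancestor: let V be a finite type, adj an acyclic relation on V, ρ a root (every vertex is reachable from ρ), and A a nonempty set of vertices. Then there exists a unique vertex v such that v is stable for A (relative to ρ) and every vertex that is stable for A is an ancestor of v. -/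
open Relation

namespace Relation

variable {V : Type*} {adj : V → V → Prop}

theorem ReflTransGen.avoiding_or_through {x a : V} (h : ReflTransGen adj x a) (v : V) :
    ReflTransGen (fun p q => adj p q ∧ q ≠ v) x a ∨
      (ReflTransGen adj x v ∧ ReflTransGen adj v a) := by
  induction h using ReflTransGen.head_induction_on with
  | refl => exact Or.inl .refl
  | @head x y hxy hya ih =>
    by_cases hyv : y = v
    · subst hyv
      exact Or.inr ⟨.single hxy, hya⟩
    · rcases ih with havoid | ⟨hyv', hva⟩
      · exact Or.inl (.head ⟨hxy, hyv⟩ havoid)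
      · exact Or.inr ⟨.head hxy hyv', hva⟩

theorem reflTransGen_antisymm_of_acyclic (hacyc : ∀ x, ¬ TransGen adj x x) {x y : V}
    (hxy : ReflTransGen adj x y) (hyx : ReflTransGen adj y x) : x = y := by
  rcases reflTransGen_iff_eq_or_transGen.mp hxy with rfl | hxy
  · rfl
  · exact absurd (hxy.trans_left hyx) (hacyc x)

theorem exists_forall_reflTransGen_of_total [Finite V] (hacyc : ∀ x, ¬ TransGen adj x x)
    {s : Set V} (hs : s.Nonempty)
    (htotal : ∀ v ∈ s, ∀ w ∈ s, ReflTransGen adj v w ∨ ReflTransGen adj w v) :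
    ∃ v ∈ s, ∀ w ∈ s, ReflTransGen adj w v := by
  have : IsTrans V (fun x y => TransGen adj y x) := ⟨fun _ _ _ h₁ h₂ => h₂.trans h₁⟩
  have : Std.Irrefl (fun x y => TransGen adj y x) := ⟨hacyc⟩
  obtain ⟨v, hvs, hvmin⟩ :=
    (Finite.wellFounded_of_trans_of_irrefl (fun x y => TransGen adj y x)).has_min s hs
  refine ⟨v, hvs, fun w hws => ?_⟩
  rcases htotal v hvs w hws with hvw | hwv
  · rcases reflTransGen_iff_eq_or_transGen.mp hvw with rfl | hvw
    · exact .refl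
    · exact absurd hvw (hvmin w hws)
  · exact hwv

end Relation

namespace Stable

variable {V : Type*} {adj : V → V → Prop} {ρ v w a : V}

theorem reflTransGen (hρa : ReflTransGen adj ρ a) (hv : Stable adj ρ v a) :
    ReflTransGen adj v a := by
  rcases hv with rfl | hv
  · exact hρa
  · exact ((hρa.avoiding_or_through v).resolve_left hv).2

theorem total (hroot : ∀ x, ReflTransGen adj ρ x) (hv : Stable adj ρ v a)
    (hw : Stable adj ρ w a) : ReflTransGen adj v w ∨ ReflTransGen adj w v := by
  rcases hw with rfl | hw
  · exact Or.inr (hroot v)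
  rcases (hv.reflTransGen (hroot a)).avoiding_or_through w with hva | ⟨hvw, -⟩
  · rcases (hroot v).avoiding_or_through w with hρv | ⟨-, hwv⟩
    · exact absurd (hρv.trans hva) hw
    · exact Or.inr hwv
  · exact Or.inl hvw

end Stable

/-- Existence and uniqueness of the lowest stable ancestor: in a finite acyclic
rooted digraph, every nonempty set `A` of vertices has a unique vertex `v` that
is stable for `A` and is a descendant of every vertex that is stable for `A`. -/
theorem lsa_existsUnique {V : Type*} [Fintype V] (adj : V → V → Prop)
    (hacyc : ∀ x, ¬ Relation.TransGen adj x x)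
    (ρ : V) (hroot : ∀ v, Relation.ReflTransGen adj ρ v)
    (A : Set V) (hA : A.Nonempty) :
    ∃! v : V, (∀ a ∈ A, Stable adj ρ v a) ∧
      ∀ w : V, (∀ a ∈ A, Stable adj ρ w a) → Relation.ReflTransGen adj w v := by
  obtain ⟨a₀, ha₀⟩ := hA
  obtain ⟨v, hvA, hlowest⟩ := exists_forall_reflTransGen_of_total
    (s := {v | ∀ a ∈ A, Stable adj ρ v a}) hacyc ⟨ρ, fun _ _ => Or.inl rfl⟩
    fun v hv w hw => (hv a₀ ha₀).total hroot (hw a₀ ha₀)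
  exact ⟨v, ⟨hvA, hlowest⟩, fun w hw =>
    reflTransGen_antisymm_of_acyclic hacyc (hlowest w hw.1) (hw.2 v hvA)⟩
end

section
/- Crossing-arc lemma: let V be a type, adj an acyclic relation on V, ρ a root (every vertex is reachable from ρ), and X a set of vertices ('leaves') such that every vertex has at least one descendant in X. Let v be a vertex such that for every ℓ ∈ X, either ℓ is not a descendant of v, or v is stable for ℓ (relative to ρ). Then every arc (u,w) with w a descendant of v and u not a descendant of v satisfies w = v. (Every arc entering the set of descendants of v enters at v itself.) -/
namespace Relation.ReflTransGen

variable {V : Type*} {r : V → V → Prop} {a b v : V}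

theorem avoiding_of_not_reflTransGen (h : ReflTransGen r a b) (hvb : ¬ ReflTransGen r v b) :
    ReflTransGen (fun x y => r x y ∧ y ≠ v) a b := by
  induction h with
  | refl => exact .refl
  | @tail c d _ hcd ih =>
    have hdv : d ≠ v := by
      rintro rfl
      exact hvb .refl
    exact (ih fun hvc => hvb (hvc.tail hcd)).tail ⟨hcd, hdv⟩

theorem avoiding_of_not_transGen (h : ReflTransGen r a b) (hav : ¬ TransGen r a v) :
    ReflTransGen (fun x y => r x y ∧ y ≠ v) a b := by
  induction h using head_induction_on with
  | refl => exact .refl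
  | @head c d hcd _ ih =>
    have hdv : d ≠ v := by
      rintro rfl
      exact hav (.single hcd)
    exact (ih fun hdv' => hav (hdv'.head hcd)).head ⟨hcd, hdv⟩

end Relation.ReflTransGen

/-- Crossing-arc lemma: if every vertex has a descendant leaf in `X`, and `v` is
stable for every leaf below it, then every arc entering the set of descendants
of `v` enters at `v` itself. -/
theorem crossing_arc {V : Type*} (adj : V → V → Prop)
    (hacyc : ∀ x, ¬ Relation.TransGen adj x x)
    (ρ : V) (hroot : ∀ v, Relation.ReflTransGen adj ρ v)
    (X : Set V) (hX : ∀ v : V, ∃ ℓ ∈ X, Relation.ReflTransGen adj v ℓ)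
    (v : V)
    (hv : ∀ ℓ ∈ X, ¬ Relation.ReflTransGen adj v ℓ ∨ Stable adj ρ v ℓ)
    (u w : V) (harc : adj u w)
    (hw : Relation.ReflTransGen adj v w)
    (hu : ¬ Relation.ReflTransGen adj v u) :
    w = v := by
  by_contra hwv
  obtain ⟨ℓ, hℓX, hwℓ⟩ := hX w
  have hvw : Relation.TransGen adj v w :=
    (Relation.reflTransGen_iff_eq_or_transGen.mp hw).resolve_left hwv
  rcases hv ℓ hℓX with hvℓ | hρv | hstable
  · exact hvℓ (hw.trans hwℓ)
  · exact hu (hρv ▸ hroot u)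
  · have hρu := (hroot u).avoiding_of_not_reflTransGen hu
    have hwℓ' := hwℓ.avoiding_of_not_transGen fun hwv' => hacyc v (hvw.trans hwv')
    exact hstable ((hρu.tail ⟨harc, hwv⟩).trans hwℓ')
end

section
/- Cut-arc stability lemma: let adj be an acyclic relation on V, ρ a root (every vertex is reachable from ρ), and u, w vertices with adj u w. Let adj₀ be the relation obtained by deleting the single arc (u,w) (adj₀ x y ↔ adj x y ∧ ¬(x = u ∧ y = w)), and let sym be its symmetric closure (sym x y ↔ adj₀ x y ∨ adj₀ y x). Suppose w is not reachable from u under Relation.ReflTransGen sym (i.e., (u,w) is a cut-arc: deleting it disconnects u from w in the underlying undirected graph). Then for every vertex t reachable from w, the vertex w is stable for t relative to ρ (every directed path from ρ to t passes through w). -/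
namespace Relation

variable {α : Type*} {r : α → α → Prop} {a b : α}

theorem ReflTransGen.restrict_ne_source (h : ReflTransGen r a b) :
    ReflTransGen (fun x y => r x y ∧ y ≠ a) a b := by
  induction h with
  | refl => rfl
  | @tail c d _ hcd ih =>
    by_cases hda : d = a
    · exact hda ▸ .refl
    · exact ih.tail ⟨hcd, hda⟩

theorem ReflTransGen.restrict_ne_target (h : ReflTransGen r a b) :
    ReflTransGen (fun x y => r x y ∧ x ≠ b) a b := by
  induction h using ReflTransGen.head_induction_on with
  | refl => rfl
  | @head c d hcd _ ih =>
    by_cases hcb : c = b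
    · exact hcb ▸ .refl
    · exact ih.head ⟨hcd, hcb⟩

def deleteArc (r : α → α → Prop) (u w : α) (x y : α) : Prop :=
  r x y ∧ ¬(x = u ∧ y = w)

variable {u w : α}

theorem ReflTransGen.symmGen_deleteArc_of_ne_source
    (h : ReflTransGen (fun x y => r x y ∧ x ≠ u) a b) :
    ReflTransGen (SymmGen (deleteArc r u w)) a b :=
  ReflTransGen.mono (fun _ _ hxy => .of_rel ⟨hxy.1, fun e => hxy.2 e.1⟩) _ _ h

theorem ReflTransGen.symmGen_deleteArc_of_ne_target
    (h : ReflTransGen (fun x y => r x y ∧ y ≠ w) a b) :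
    ReflTransGen (SymmGen (deleteArc r u w)) a b :=
  ReflTransGen.mono (fun _ _ hxy => .of_rel ⟨hxy.1, fun e => hxy.2 e.2⟩) _ _ h

end Relation

open Relation in
theorem cut_arc_stable_general {V : Type*} (adj : V → V → Prop)
    (ρ : V) (hroot : ∀ v, Relation.ReflTransGen adj ρ v)
    (u w : V)
    (hcut : ¬ Relation.ReflTransGen
      (fun x y => (adj x y ∧ ¬(x = u ∧ y = w)) ∨ (adj y x ∧ ¬(y = u ∧ x = w))) u w)
    (t : V) (ht : Relation.ReflTransGen adj w t) :
    Stable adj ρ w t := by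
  -- `hcut` speaks about `SymmGen (deleteArc adj u w)`, unfolded.
  refine Or.inr fun hρt => hcut ?_
  have ρ_u : ReflTransGen (SymmGen (deleteArc adj u w)) ρ u :=
    (hroot u).restrict_ne_target.symmGen_deleteArc_of_ne_source
  have ρ_t : ReflTransGen (SymmGen (deleteArc adj u w)) ρ t :=
    hρt.symmGen_deleteArc_of_ne_target
  have w_t : ReflTransGen (SymmGen (deleteArc adj u w)) w t :=
    ht.restrict_ne_source.symmGen_deleteArc_of_ne_target
  exact (symm ρ_u).trans (ρ_t.trans (symm w_t))

/-- Cut-arc stability lemma: if deleting the arc `(u,w)` disconnects `u` from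
`w` in the underlying undirected graph, then `w` is stable (relative to the
root `ρ`) for every vertex reachable from `w`. -/
theorem cut_arc_stable {V : Type*} (adj : V → V → Prop)
    (hacyc : ∀ x, ¬ Relation.TransGen adj x x)
    (ρ : V) (hroot : ∀ v, Relation.ReflTransGen adj ρ v)
    (u w : V) (huw : adj u w)
    (hcut : ¬ Relation.ReflTransGen
      (fun x y => (adj x y ∧ ¬(x = u ∧ y = w)) ∨ (adj y x ∧ ¬(y = u ∧ x = w))) u w)
    (t : V) (ht : Relation.ReflTransGen adj w t) :
    Stable adj ρ w t :=
  cut_arc_stable_general adj ρ hroot u w hcut t ht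
end

section
/- Pointwise score lemma for side assignment: for all distinct x, y in X: if P x = P y then r x y equals the number of z ∈ X with P z = P x, and in particular r x y ≥ 2; if P x ≠ P y then r x y = −(#{z | P z = P x} + #{z | P z = P y}), and in particular r x y ≤ −2. Consequently, for distinct x, y, one has r x y ≥ 0 if and only if P x = P y. -/
/-!
If `x` and `y` lie in the same block then `q x = q y`, so the sum of minima is the block size
and `r x y = 3n - n - n = n`; otherwise `q x` and `q y` have disjoint supports, the sum of
minima vanishes and `r x y` is minus the sum of the two block sizes.
-/

open Finset

section Partition

variable {X β : Type*} [Fintype X] [DecidableEq β] (P : X → β)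

def sameBlock (x y : X) : ℤ := if P x = P y then 1 else 0

def score (x y : X) : ℤ :=
  3 * (∑ z, min (sameBlock P x z) (sameBlock P y z)) - ∑ z, sameBlock P x z -
    ∑ z, sameBlock P y z

theorem sum_sameBlock (x : X) : ∑ z, sameBlock P x z = #{z | P z = P x} := by
  simp [sameBlock, sum_boole, eq_comm]

theorem card_filter_eq_pos (x : X) : 0 < #{z | P z = P x} :=
  card_pos.mpr ⟨x, by simp⟩

theorem two_le_card_filter_eq {x y : X} (hxy : x ≠ y) (h : P x = P y) :
    2 ≤ #{z | P z = P x} := by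
  classical
  rw [← card_pair hxy]
  refine card_le_card fun z hz => ?_
  rcases mem_insert.mp hz with rfl | hz
  · simp
  · simp [mem_singleton.mp hz, h]

variable {P}

theorem score_of_eq {x y : X} (h : P x = P y) : score P x y = #{z | P z = P x} := by
  have hxy : sameBlock P x = sameBlock P y := by ext z; simp [sameBlock, h]
  simp only [score, ← hxy, min_self, sum_sameBlock]
  ring

theorem score_of_ne {x y : X} (h : P x ≠ P y) :
    score P x y = -(#{z | P z = P x} + #{z | P z = P y} : ℤ) := by
  have hmin : ∀ z, min (sameBlock P x z) (sameBlock P y z) = 0 := fun z => by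
    by_cases hx : P x = P z
    · simp [sameBlock, hx, show P y ≠ P z from fun hy => h (hx.trans hy.symm)]
    · simp only [sameBlock, hx, if_false]
      exact min_eq_left (by split_ifs <;> simp)
  simp only [score, hmin, sum_const_zero, sum_sameBlock]
  ring

end Partition

theorem pointwise_score_general {X : Type*} [Fintype X] (P : X → Bool) :
    let q : X → X → ℤ := fun x y => if P x = P y then 1 else 0
    let r : X → X → ℤ := fun x y =>
      3 * (∑ z : X, min (q x z) (q y z)) - (∑ z : X, q x z) - (∑ z : X, q y z)
    ∀ x y : X, x ≠ y →
      ((P x = P y →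
          r x y = ((Finset.univ.filter (fun z => P z = P x)).card : ℤ) ∧ 2 ≤ r x y) ∧
       (P x ≠ P y →
          r x y = -(((Finset.univ.filter (fun z => P z = P x)).card : ℤ) +
            ((Finset.univ.filter (fun z => P z = P y)).card : ℤ)) ∧ r x y ≤ -2) ∧
       (0 ≤ r x y ↔ P x = P y)) := by
  intro q r x y hxy
  have hr : r x y = score P x y := rfl
  rw [hr]
  by_cases h : P x = P y
  · have h2 : (2 : ℤ) ≤ #{z | P z = P x} := mod_cast two_le_card_filter_eq P hxy h
    rw [score_of_eq h]
    exact ⟨fun _ => ⟨rfl, h2⟩, fun hne => absurd h hne, fun _ => h, fun _ => by omega⟩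
  · have hx := card_filter_eq_pos P x
    have hy := card_filter_eq_pos P y
    rw [score_of_ne h]
    exact ⟨fun he => absurd he h, fun _ => ⟨rfl, by omega⟩, fun _ => by omega, fun he => absurd he h⟩

/-- Pointwise score lemma for side assignment: for distinct `x, y`, the score
`r x y` equals the size of their common block if `P x = P y` (hence is `≥ 2`),
and equals minus the sum of the sizes of their two blocks if `P x ≠ P y`
(hence is `≤ -2`); consequently `r x y ≥ 0 ↔ P x = P y`. -/
theorem pointwise_score {X : Type*} [Fintype X] [Nonempty X] (P : X → Bool) :
    let q : X → X → ℤ := fun x y => if P x = P y then 1 else 0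
    let r : X → X → ℤ := fun x y =>
      3 * (∑ z : X, min (q x z) (q y z)) - (∑ z : X, q x z) - (∑ z : X, q y z)
    ∀ x y : X, x ≠ y →
      ((P x = P y →
          r x y = ((Finset.univ.filter (fun z => P z = P x)).card : ℤ) ∧ 2 ≤ r x y) ∧
       (P x ≠ P y →
          r x y = -(((Finset.univ.filter (fun z => P z = P x)).card : ℤ) +
            ((Finset.univ.filter (fun z => P z = P y)).card : ℤ)) ∧ r x y ≤ -2) ∧
       (0 ≤ r x y ↔ P x = P y)) :=
  pointwise_score_general P
end

section
/- Block-sum score lemma for agglomerative merging: let A and B be disjoint nonempty finite subsets of X. If all elements of A ∪ B have the same value under P, then Σ_{x ∈ A} Σ_{y ∈ B} r x y > 0. If instead every element of A has P-value true and every element of B has P-value false, then Σ_{x ∈ A} Σ_{y ∈ B} r x y < 0. -/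
/-! If `P x = P y` then `r x y` is the size of the common block, hence positive; otherwise no `z`
lies in both blocks, the `min` term vanishes and `r x y` is minus the sum of the two block sizes.
Summing these signs over `A × B` gives both claims. -/

open Finset

section BlockScore

variable {X β : Type*} [Fintype X] [DecidableEq β] (P : X → β)

def blockIndicator (x y : X) : ℤ := if P x = P y then 1 else 0

def mergeScore (x y : X) : ℤ :=
  3 * ∑ z, min (blockIndicator P x z) (blockIndicator P y z) -
    ∑ z, blockIndicator P x z - ∑ z, blockIndicator P y z

lemma sum_blockIndicator_pos (x : X) : 0 < ∑ z, blockIndicator P x z := by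
  have hx : blockIndicator P x x = 1 := if_pos rfl
  calc (0 : ℤ) < blockIndicator P x x := by rw [hx]; exact one_pos
    _ ≤ ∑ z, blockIndicator P x z :=
      single_le_sum (fun z _ => by unfold blockIndicator; split_ifs <;> norm_num) (mem_univ x)

variable {P}

lemma mergeScore_pos_of_eq {x y : X} (h : P x = P y) : 0 < mergeScore P x y := by
  have hxy : blockIndicator P y = blockIndicator P x := by
    funext z; simp only [blockIndicator, h]
  have := sum_blockIndicator_pos P x
  simp only [mergeScore, hxy, min_self]
  linarith

lemma mergeScore_neg_of_ne {x y : X} (h : P x ≠ P y) : mergeScore P x y < 0 := by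
  have hmin : ∀ z, min (blockIndicator P x z) (blockIndicator P y z) = 0 := by
    intro z
    unfold blockIndicator
    split_ifs with hxz hyz
    · exact absurd (hxz.trans hyz.symm) h
    all_goals norm_num
  have := sum_blockIndicator_pos P x
  have := sum_blockIndicator_pos P y
  simp only [mergeScore, hmin, sum_const_zero]
  linarith

end BlockScore

theorem block_sum_score_general {X : Type*} [Fintype X] [DecidableEq X] (P : X → Bool)
    (A B : Finset X) (hA : A.Nonempty) (hB : B.Nonempty) :
    let q : X → X → ℤ := fun x y => if P x = P y then 1 else 0
    let r : X → X → ℤ := fun x y =>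
      3 * (∑ z : X, min (q x z) (q y z)) - (∑ z : X, q x z) - (∑ z : X, q y z)
    ((∀ x ∈ A ∪ B, ∀ y ∈ A ∪ B, P x = P y) → 0 < ∑ x ∈ A, ∑ y ∈ B, r x y) ∧
    ((∀ x ∈ A, P x = true) → (∀ y ∈ B, P y = false) →
      (∑ x ∈ A, ∑ y ∈ B, r x y) < 0) := by
  show ((∀ x ∈ A ∪ B, ∀ y ∈ A ∪ B, P x = P y) →
      0 < ∑ x ∈ A, ∑ y ∈ B, mergeScore P x y) ∧
    ((∀ x ∈ A, P x = true) → (∀ y ∈ B, P y = false) →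
      ∑ x ∈ A, ∑ y ∈ B, mergeScore P x y < 0)
  refine ⟨fun hsame => ?_, fun hAtrue hBfalse => ?_⟩
  · exact sum_pos (fun x hx => sum_pos (fun y hy => mergeScore_pos_of_eq
      (hsame x (mem_union_left _ hx) y (mem_union_right _ hy))) hB) hA
  · exact sum_neg (fun x hx => sum_neg (fun y hy => mergeScore_neg_of_ne
      (by rw [hAtrue x hx, hBfalse y hy]; decide)) hB) hA

/-- Block-sum score lemma for agglomerative merging: for disjoint nonempty
subsets `A`, `B` of `X`, the total score `∑_{x ∈ A} ∑_{y ∈ B} r x y` is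
positive if all elements of `A ∪ B` lie in the same block of `P`, and negative
if `A` lies entirely in the `true` block and `B` entirely in the `false`
block. -/
theorem block_sum_score {X : Type*} [Fintype X] [DecidableEq X] [Nonempty X] (P : X → Bool)
    (A B : Finset X) (hdisj : Disjoint A B) (hA : A.Nonempty) (hB : B.Nonempty) :
    let q : X → X → ℤ := fun x y => if P x = P y then 1 else 0
    let r : X → X → ℤ := fun x y =>
      3 * (∑ z : X, min (q x z) (q y z)) - (∑ z : X, q x z) - (∑ z : X, q y z)
    ((∀ x ∈ A ∪ B, ∀ y ∈ A ∪ B, P x = P y) → 0 < ∑ x ∈ A, ∑ y ∈ B, r x y) ∧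
    ((∀ x ∈ A, P x = true) → (∀ y ∈ B, P y = false) →
      (∑ x ∈ A, ∑ y ∈ B, r x y) < 0) :=
  block_sum_score_general P A B hA hB
end
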